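/- Let n ≥ 2 and consider the three-dimensional discrete gradient with blocks B_x = (1/(4h))·(G ⊗ H ⊗ H), B_y = (1/(4h))·(H ⊗ G ⊗ H), B_z = (1/(4h))·(H ⊗ H ⊗ G), h = 1/n. The common kernel {p ∈ ℝ^{n³} : B_x p = 0, B_y p = 0, B_z p = 0} has dimension 3n − 1. Consequently the Schur complement Bᵀ A⁻¹ B of the three-dimensional semi-staggered Stokes discretization has exactly 3n − 1 zero eigenvalues. -/

import Mathlib

/-!
Write `(G x) a = x (a+1) - x a` and `(H x) a = x (a+1) + x a`: the kernel of `G` consists of the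
constants, that of `H` is spanned by `alt j = (-1)^j`. If `p` lies in the common kernel, then for
each direction the sums of `p` over the four corners of the cells transversal to that direction
do not change along it. Splitting the sum over the eight corners of a cube in the three possible
ways shows that all these cell sums equal a single constant `κ`, so `r = p - κ/4` has vanishing
cell sums in every coordinate plane. Solving the resulting two-term recurrences row by row gives
`r i j k = alt j alt k f i + alt i alt k g j + alt i alt j h k`, which is unique once `g 0 = h 0 = 0`;
hence the kernel has dimension `n + 2 (n - 1) + 1 = 3n - 1`.

For the Schur complement, `G ⊗ H ⊗ H` has an explicit right inverse, so `B_xᵀ` is injective and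
`Δ`, `A = I₃ ⊗ Δ` and `A⁻¹` are positive definite; thus `Bᵀ A⁻¹ B` has the same kernel as `B`.
-/

open Matrix
open scoped Kronecker

def Emat (n : ℕ) : Matrix (Fin (n - 1)) (Fin n) ℝ :=
  Matrix.of fun i j => if (j : ℕ) = (i : ℕ) + 1 then 1 else 0

def Zmat (n : ℕ) : Matrix (Fin (n - 1)) (Fin n) ℝ :=
  Matrix.of fun i j => if (j : ℕ) = (i : ℕ) then 1 else 0

def Gmat (n : ℕ) : Matrix (Fin (n - 1)) (Fin n) ℝ := Emat n - Zmat n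

def Hmat (n : ℕ) : Matrix (Fin (n - 1)) (Fin n) ℝ := Emat n + Zmat n

namespace SemiStaggered

theorem kronecker_mulVec_apply {R l m p q : Type*} [CommSemiring R] [Fintype m] [Fintype q]
    (A : Matrix l m R) (B : Matrix p q R) (x : m × q → R) (i : l) (j : p) :
    (A ⊗ₖ B *ᵥ x) (i, j) = (A *ᵥ fun k => (B *ᵥ fun k' => x (k, k')) j) i := by
  simp only [mulVec, dotProduct, kroneckerMap_apply, Fintype.sum_prod_type, Finset.mul_sum,
    mul_assoc]

variable {n : ℕ}

def lo (a : Fin (n - 1)) : Fin n := ⟨a, by have := a.isLt; omega⟩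

def hi (a : Fin (n - 1)) : Fin n := ⟨a + 1, by have := a.isLt; omega⟩

@[simp] theorem val_lo (a : Fin (n - 1)) : (lo a : ℕ) = a := rfl

@[simp] theorem val_hi (a : Fin (n - 1)) : (hi a : ℕ) = a + 1 := rfl

theorem hi_injective : Function.Injective (hi : Fin (n - 1) → Fin n) :=
  fun a b h => Fin.ext (by simpa using congrArg Fin.val h)

theorem eq_zero_or_exists_hi_eq [NeZero n] (j : Fin n) : j = 0 ∨ ∃ a, hi a = j := by
  rcases Nat.eq_zero_or_eq_succ_pred (j : ℕ) with h | h
  · exact Or.inl (Fin.ext h)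
  · exact Or.inr ⟨⟨(j : ℕ) - 1, by have := j.isLt; omega⟩, Fin.ext (by simp; omega)⟩

theorem hi_ne_zero [NeZero n] (a : Fin (n - 1)) : hi a ≠ 0 :=
  fun h => by simpa using congrArg Fin.val h

theorem Emat_mulVec (x : Fin n → ℝ) (a : Fin (n - 1)) : (Emat n *ᵥ x) a = x (hi a) := by
  have : ∀ j, Emat n a j = if j = hi a then 1 else 0 := fun j => by simp [Emat, Fin.ext_iff]
  simp [mulVec, dotProduct, this]

theorem Zmat_mulVec (x : Fin n → ℝ) (a : Fin (n - 1)) : (Zmat n *ᵥ x) a = x (lo a) := by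
  have : ∀ j, Zmat n a j = if j = lo a then 1 else 0 := fun j => by simp [Zmat, Fin.ext_iff]
  simp [mulVec, dotProduct, this]

theorem Gmat_mulVec (x : Fin n → ℝ) (a : Fin (n - 1)) :
    (Gmat n *ᵥ x) a = x (hi a) - x (lo a) := by
  simp [Gmat, sub_mulVec, Emat_mulVec, Zmat_mulVec]

theorem Hmat_mulVec (x : Fin n → ℝ) (a : Fin (n - 1)) :
    (Hmat n *ᵥ x) a = x (hi a) + x (lo a) := by
  simp [Hmat, add_mulVec, Emat_mulVec, Zmat_mulVec]

def alt (j : Fin n) : ℝ := (-1) ^ (j : ℕ)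

theorem alt_hi (a : Fin (n - 1)) : alt (hi a) = -alt (lo a) := by
  simp [alt, pow_succ]

theorem alt_mul_self (j : Fin n) : alt j * alt j = 1 := by
  simp [alt, ← mul_pow]

@[simp] theorem alt_zero [NeZero n] : alt (0 : Fin n) = 1 := by simp [alt]

theorem apply_eq_pow_mul_apply_zero [NeZero n] {c : ℝ} {u : Fin n → ℝ}
    (h : ∀ a, u (hi a) = c * u (lo a)) (i : Fin n) : u i = c ^ (i : ℕ) * u 0 := by
  obtain ⟨m, hm⟩ := i
  induction m with
  | zero => simp
  | succ m ih =>
    have step := h ⟨m, by omega⟩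
    simp only [hi, lo] at step
    rw [step, ih (by omega), pow_succ]
    ring

def cellSum (r : Fin n → Fin n → ℝ) (b c : Fin (n - 1)) : ℝ :=
  r (hi b) (hi c) + r (hi b) (lo c) + r (lo b) (hi c) + r (lo b) (lo c)

theorem cellSum_sub_const (r : Fin n → Fin n → ℝ) (κ : ℝ) (b c : Fin (n - 1)) :
    cellSum (fun j k => r j k - κ) b c = cellSum r b c - 4 * κ := by
  simp only [cellSum]
  ring

theorem apply_eq_of_cellSum_eq_zero [NeZero n] {r : Fin n → Fin n → ℝ}
    (h : ∀ b c, cellSum r b c = 0) (j k : Fin n) :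
    r j k = alt k * r j 0 + alt j * r 0 k - alt j * alt k * r 0 0 := by
  simp only [cellSum] at h
  have hpair : ∀ b k, r (hi b) k + r (lo b) k = alt k * (r (hi b) 0 + r (lo b) 0) := fun b =>
    apply_eq_pow_mul_apply_zero (c := -1) (u := fun k => r (hi b) k + r (lo b) k) fun c => by
      linear_combination h b c
  have hrow := apply_eq_pow_mul_apply_zero (c := -1) (u := fun j => r j k - alt k * r j 0)
    (fun b => by linear_combination hpair b k) j
  simp only [alt] at hrow ⊢
  linear_combination hrow

theorem GHH_mulVec (p : (Fin n × Fin n) × Fin n → ℝ) (a b c : Fin (n - 1)) :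
    (Gmat n ⊗ₖ Hmat n ⊗ₖ Hmat n *ᵥ p) ((a, b), c) =
      cellSum (fun j k => p ((hi a, j), k)) b c - cellSum (fun j k => p ((lo a, j), k)) b c := by
  simp only [kronecker_mulVec_apply, Gmat_mulVec, Hmat_mulVec, cellSum]
  ring

theorem HGH_mulVec (p : (Fin n × Fin n) × Fin n → ℝ) (a b c : Fin (n - 1)) :
    (Hmat n ⊗ₖ Gmat n ⊗ₖ Hmat n *ᵥ p) ((a, b), c) =
      cellSum (fun i k => p ((i, hi b), k)) a c - cellSum (fun i k => p ((i, lo b), k)) a c := by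
  simp only [kronecker_mulVec_apply, Gmat_mulVec, Hmat_mulVec, cellSum]
  ring

theorem HHG_mulVec (p : (Fin n × Fin n) × Fin n → ℝ) (a b c : Fin (n - 1)) :
    (Hmat n ⊗ₖ Hmat n ⊗ₖ Gmat n *ᵥ p) ((a, b), c) =
      cellSum (fun i j => p ((i, j), hi c)) a b - cellSum (fun i j => p ((i, j), lo c)) a b := by
  simp only [kronecker_mulVec_apply, Gmat_mulVec, Hmat_mulVec, cellSum]
  ring

variable (n) in
def commonKernel : Submodule ℝ ((Fin n × Fin n) × Fin n → ℝ) :=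
  LinearMap.ker (Gmat n ⊗ₖ Hmat n ⊗ₖ Hmat n).mulVecLin ⊓
    LinearMap.ker (Hmat n ⊗ₖ Gmat n ⊗ₖ Hmat n).mulVecLin ⊓
    LinearMap.ker (Hmat n ⊗ₖ Hmat n ⊗ₖ Gmat n).mulVecLin

theorem mem_commonKernel_iff {p : (Fin n × Fin n) × Fin n → ℝ} :
    p ∈ commonKernel n ↔
      (∀ a b c, cellSum (fun j k => p ((hi a, j), k)) b c =
        cellSum (fun j k => p ((lo a, j), k)) b c) ∧
      (∀ a b c, cellSum (fun i k => p ((i, hi b), k)) a c =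
        cellSum (fun i k => p ((i, lo b), k)) a c) ∧
      (∀ a b c, cellSum (fun i j => p ((i, j), hi c)) a b =
        cellSum (fun i j => p ((i, j), lo c)) a b) := by
  simp only [commonKernel, Submodule.mem_inf, LinearMap.mem_ker, mulVecLin_apply, funext_iff,
    Prod.forall, Pi.zero_apply, GHH_mulVec, HGH_mulVec, HHG_mulVec, sub_eq_zero, and_assoc]

theorem exists_cellSum_eq_const (hn : 1 < n) {p : (Fin n × Fin n) × Fin n → ℝ}
    (hp : p ∈ commonKernel n) : ∃ κ,
      (∀ i b c, cellSum (fun j k => p ((i, j), k)) b c = κ) ∧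
      (∀ j a c, cellSum (fun i k => p ((i, j), k)) a c = κ) ∧
      (∀ k a b, cellSum (fun i j => p ((i, j), k)) a b = κ) := by
  have : NeZero n := ⟨by omega⟩
  obtain ⟨hX, hY, hZ⟩ := mem_commonKernel_iff.1 hp
  have h₁ : ∀ i b c, cellSum (fun j k => p ((i, j), k)) b c =
      cellSum (fun j k => p ((0, j), k)) b c := fun i b c => by
    simpa using apply_eq_pow_mul_apply_zero (c := 1)
      (u := fun i => cellSum (fun j k => p ((i, j), k)) b c) (fun a => by simpa using hX a b c) i
  have h₂ : ∀ j a c, cellSum (fun i k => p ((i, j), k)) a c =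
      cellSum (fun i k => p ((i, 0), k)) a c := fun j a c => by
    simpa using apply_eq_pow_mul_apply_zero (c := 1)
      (u := fun j => cellSum (fun i k => p ((i, j), k)) a c) (fun b => by simpa using hY a b c) j
  have h₃ : ∀ k a b, cellSum (fun i j => p ((i, j), k)) a b =
      cellSum (fun i j => p ((i, j), 0)) a b := fun k a b => by
    simpa using apply_eq_pow_mul_apply_zero (c := 1)
      (u := fun k => cellSum (fun i j => p ((i, j), k)) a b) (fun c => by simpa using hZ a b c) k
  -- the sum of `p` over the eight corners of a cell, split along each of the three directions
  have hcorners : ∀ a b c,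
      cellSum (fun j k => p ((0, j), k)) b c = cellSum (fun i k => p ((i, 0), k)) a c ∧
      cellSum (fun j k => p ((0, j), k)) b c = cellSum (fun i j => p ((i, j), 0)) a b := by
    intro a b c
    have hx := congrArg₂ (· + ·) (h₁ (hi a) b c) (h₁ (lo a) b c)
    have hy := congrArg₂ (· + ·) (h₂ (hi b) a c) (h₂ (lo b) a c)
    have hz := congrArg₂ (· + ·) (h₃ (hi c) a b) (h₃ (lo c) a b)
    simp only [cellSum] at hx hy hz ⊢
    constructor <;> linarith
  let a₀ : Fin (n - 1) := ⟨0, by omega⟩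
  have hκ : ∀ b c, cellSum (fun j k => p ((0, j), k)) b c =
      cellSum (fun j k => p ((0, j), k)) a₀ a₀ := fun b c => by
    linarith [(hcorners a₀ b c).1, (hcorners a₀ a₀ c).1, (hcorners a₀ a₀ c).2,
      (hcorners a₀ a₀ a₀).2]
  refine ⟨cellSum (fun j k => p ((0, j), k)) a₀ a₀, fun i b c => ?_, fun j a c => ?_,
    fun k a b => ?_⟩
  · rw [h₁, hκ]
  · rw [h₂, ← (hcorners a a₀ c).1, hκ]
  · rw [h₃, ← (hcorners a b a₀).2, hκ]

theorem apply_eq_of_cellSum_eq_zero₃ [NeZero n] {r : (Fin n × Fin n) × Fin n → ℝ}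
    (h₁ : ∀ i b c, cellSum (fun j k => r ((i, j), k)) b c = 0)
    (h₂ : ∀ j a c, cellSum (fun i k => r ((i, j), k)) a c = 0)
    (h₃ : ∀ k a b, cellSum (fun i j => r ((i, j), k)) a b = 0) (i j k : Fin n) :
    r ((i, j), k) = alt j * alt k * r ((i, 0), 0) +
      alt i * alt k * (r ((0, j), 0) - alt j * r ((0, 0), 0)) +
      alt i * alt j * (r ((0, 0), k) - alt k * r ((0, 0), 0)) := by
  have e₁ := apply_eq_of_cellSum_eq_zero (h₁ i) j k
  have e₂ := apply_eq_of_cellSum_eq_zero (h₃ 0) i j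
  have e₃ := apply_eq_of_cellSum_eq_zero (h₂ 0) i k
  linear_combination e₁ + alt k * e₂ + alt j * e₃

theorem extend_hi_comp [NeZero n] {φ : Fin n → ℝ} (h₀ : φ 0 = 0) :
    Function.extend hi (φ ∘ hi) 0 = φ := by
  funext j
  rcases eq_zero_or_exists_hi_eq j with rfl | ⟨a, rfl⟩
  · rw [Function.extend_apply' _ _ _ fun ⟨a, ha⟩ => hi_ne_zero a ha, h₀, Pi.zero_apply]
  · exact hi_injective.extend_apply _ _ a

variable (n) in
/-- The `alt ⊗ e_j ⊗ alt` and `alt ⊗ alt ⊗ e_k` families both contain `alt ⊗ alt ⊗ alt` (at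
`j = 0`, `k = 0`), which the `e_i ⊗ alt ⊗ alt` family already spans; so `g` and `h` are indexed by
`Fin (n - 1)` and enter through their extension by zero along `hi`. -/
noncomputable def kernelParam :
    (Fin n → ℝ) × (Fin (n - 1) → ℝ) × (Fin (n - 1) → ℝ) × ℝ →ₗ[ℝ]
      ((Fin n × Fin n) × Fin n → ℝ) where
  toFun x p :=
    alt p.1.2 * alt p.2 * x.1 p.1.1 +
      alt p.1.1 * alt p.2 * Function.ExtendByZero.linearMap ℝ hi x.2.1 p.1.2 +
      alt p.1.1 * alt p.1.2 * Function.ExtendByZero.linearMap ℝ hi x.2.2.1 p.2 + x.2.2.2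
  map_add' x y := by
    ext
    simp only [Prod.fst_add, Prod.snd_add, map_add, Pi.add_apply]
    ring
  map_smul' c x := by
    ext
    simp only [Prod.smul_fst, Prod.smul_snd, map_smul, Pi.smul_apply, smul_eq_mul,
      RingHom.id_apply]
    ring

theorem kernelParam_apply (f : Fin n → ℝ) (g h : Fin (n - 1) → ℝ) (δ : ℝ) (i j k : Fin n) :
    kernelParam n (f, g, h, δ) ((i, j), k) =
      alt j * alt k * f i + alt i * alt k * Function.extend hi g 0 j +
        alt i * alt j * Function.extend hi h 0 k + δ :=
  rfl

theorem cellSum_kernelParam (x : (Fin n → ℝ) × (Fin (n - 1) → ℝ) × (Fin (n - 1) → ℝ) × ℝ) :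
    (∀ i b c, cellSum (fun j k => kernelParam n x ((i, j), k)) b c = 4 * x.2.2.2) ∧
    (∀ j a c, cellSum (fun i k => kernelParam n x ((i, j), k)) a c = 4 * x.2.2.2) ∧
    (∀ k a b, cellSum (fun i j => kernelParam n x ((i, j), k)) a b = 4 * x.2.2.2) := by
  obtain ⟨f, g, h, δ⟩ := x
  refine ⟨fun _ _ _ => ?_, fun _ _ _ => ?_, fun _ _ _ => ?_⟩ <;>
  · simp only [cellSum, kernelParam_apply, alt_hi]
    ring

theorem kernelParam_injective (hn : 1 < n) : Function.Injective (kernelParam n) := by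
  have : NeZero n := ⟨by omega⟩
  rw [← LinearMap.ker_eq_bot, LinearMap.ker_eq_bot']
  rintro ⟨f, g, h, δ⟩ hx
  have ev : ∀ i j k, kernelParam n (f, g, h, δ) ((i, j), k) = 0 := fun i j k => congrFun hx _
  simp only [kernelParam_apply] at ev
  have e₀ : ∀ g : Fin (n - 1) → ℝ, Function.extend hi g 0 0 = 0 := fun g =>
    Function.extend_apply' _ _ _ fun ⟨a, ha⟩ => hi_ne_zero a ha
  have ehi : ∀ (g : Fin (n - 1) → ℝ) a, Function.extend hi g 0 (hi a) = g a :=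
    fun g => hi_injective.extend_apply g 0
  have hf : ∀ i, f i = -δ := fun i => by
    linarith [show f i + δ = 0 by simpa [e₀] using ev i 0 0]
  let a₀ : Fin (n - 1) := ⟨0, by omega⟩
  have halt : alt (hi a₀) = -1 := by simp [alt, a₀]
  have hδ : δ = 0 := by
    have e₁ := ev 0 (hi a₀) 0
    have e₂ := ev (hi a₀) (hi a₀) 0
    simp only [e₀, ehi, halt, alt_zero, hf] at e₁ e₂
    linarith
  have hg : ∀ b, g b = 0 := fun b => by simpa [e₀, ehi, hf, hδ] using ev 0 (hi b) 0
  have hh : ∀ c, h c = 0 := fun c => by simpa [e₀, ehi, hf, hδ] using ev 0 0 (hi c)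
  simp only [Prod.mk_eq_zero, hδ, and_true]
  exact ⟨funext fun i => by simp [hf, hδ], funext hg, funext hh⟩

theorem range_kernelParam (hn : 1 < n) : LinearMap.range (kernelParam n) = commonKernel n := by
  have : NeZero n := ⟨by omega⟩
  apply le_antisymm
  · rintro _ ⟨x, rfl⟩
    obtain ⟨h₁, h₂, h₃⟩ := cellSum_kernelParam x
    exact mem_commonKernel_iff.2
      ⟨fun a b c => by rw [h₁, h₁], fun a b c => by rw [h₂, h₂], fun a b c => by rw [h₃, h₃]⟩
  · intro p hp
    obtain ⟨κ, h₁, h₂, h₃⟩ := exists_cellSum_eq_const hn hp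
    let r : (Fin n × Fin n) × Fin n → ℝ := fun q => p q - κ / 4
    have hsep := apply_eq_of_cellSum_eq_zero₃ (r := r)
      (fun i b c => (cellSum_sub_const _ _ b c).trans (by rw [h₁]; ring))
      (fun j a c => (cellSum_sub_const _ _ a c).trans (by rw [h₂]; ring))
      (fun k a b => (cellSum_sub_const _ _ a b).trans (by rw [h₃]; ring))
    let φ : Fin n → ℝ := fun j => r ((0, j), 0) - alt j * r ((0, 0), 0)
    let ψ : Fin n → ℝ := fun k => r ((0, 0), k) - alt k * r ((0, 0), 0)
    refine ⟨(fun i => r ((i, 0), 0), φ ∘ hi, ψ ∘ hi, κ / 4), funext fun ⟨⟨i, j⟩, k⟩ => ?_⟩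
    rw [kernelParam_apply, extend_hi_comp (by simp [φ]), extend_hi_comp (by simp [ψ])]
    simp only [φ, ψ]
    linarith [hsep i j k, show r ((i, j), k) = p ((i, j), k) - κ / 4 from rfl]

theorem finrank_commonKernel (hn : 1 < n) : Module.finrank ℝ (commonKernel n) = 3 * n - 1 := by
  rw [← range_kernelParam hn, LinearMap.finrank_range_of_inj (kernelParam_injective hn)]
  simp only [Module.finrank_prod, Module.finrank_fin_fun, Module.finrank_self]
  omega

variable (n) in
def rightInvG : Matrix (Fin n) (Fin (n - 1)) ℝ := of fun j a => if (a : ℕ) < j then 1 else 0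

variable (n) in
def rightInvH : Matrix (Fin n) (Fin (n - 1)) ℝ :=
  of fun j a => if (a : ℕ) < j then -(alt j * alt (lo a)) else 0

theorem Gmat_mul_rightInvG : Gmat n * rightInvG n = 1 := by
  ext b a
  change (Gmat n *ᵥ fun j => rightInvG n j a) b = _
  rw [Gmat_mulVec]
  simp only [rightInvG, of_apply, val_hi, val_lo, one_apply]
  rcases lt_trichotomy (a : ℕ) b with h | h | h
  · simp [h, Fin.ne_of_val_ne h.ne', show (a : ℕ) < b + 1 by omega]
  · obtain rfl : a = b := Fin.ext h
    simp
  · simp [h.not_gt, Fin.ne_of_val_ne h.ne, show ¬(a : ℕ) < b + 1 by omega]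

theorem Hmat_mul_rightInvH : Hmat n * rightInvH n = 1 := by
  ext b a
  change (Hmat n *ᵥ fun j => rightInvH n j a) b = _
  rw [Hmat_mulVec]
  simp only [rightInvH, of_apply, val_hi, val_lo, one_apply, alt_hi]
  rcases lt_trichotomy (a : ℕ) b with h | h | h
  · simp [h, Fin.ne_of_val_ne h.ne', show (a : ℕ) < b + 1 by omega]
  · obtain rfl : a = b := Fin.ext h
    simp [alt_mul_self]
  · simp [h.not_gt, Fin.ne_of_val_ne h.ne, show ¬(a : ℕ) < b + 1 by omega]

theorem GHH_mul_rightInv :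
    (Gmat n ⊗ₖ Hmat n ⊗ₖ Hmat n) * (rightInvG n ⊗ₖ rightInvH n ⊗ₖ rightInvH n) = 1 := by
  rw [← mul_kronecker_mul, ← mul_kronecker_mul, Gmat_mul_rightInvG, Hmat_mul_rightInvH,
    one_kronecker_one, one_kronecker_one]

theorem ker_mulVecLin_smul {ι κ : Type*} [Fintype κ] {c : ℝ} (hc : c ≠ 0) (M : Matrix ι κ ℝ) :
    LinearMap.ker (c • M).mulVecLin = LinearMap.ker M.mulVecLin := by
  ext v
  simp [hc]

theorem vecMul_injective_of_mul_eq_one {ι κ : Type*} [Fintype ι] [Fintype κ] [DecidableEq ι]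
    {M : Matrix ι κ ℝ} {R : Matrix κ ι ℝ} (h : M * R = 1) : Function.Injective M.vecMul :=
  fun x y hxy => by simpa [vecMul_vecMul, h] using congrArg (· ᵥ* R) hxy

theorem vecMul_injective_smul_GHH {c : ℝ} (hc : c ≠ 0) :
    Function.Injective (c • (Gmat n ⊗ₖ Hmat n ⊗ₖ Hmat n)).vecMul :=
  vecMul_injective_of_mul_eq_one (R := c⁻¹ • (rightInvG n ⊗ₖ rightInvH n ⊗ₖ rightInvH n)) (by
    rw [Matrix.smul_mul, Matrix.mul_smul, smul_smul, mul_inv_cancel₀ hc, one_smul,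
      GHH_mul_rightInv])

theorem ker_mulVecLin_transpose_mul_mul {ι κ : Type*} [Fintype ι] [Fintype κ]
    {M : Matrix ι ι ℝ} (hM : M.PosDef) (B : Matrix ι κ ℝ) :
    LinearMap.ker (Bᵀ * M * B).mulVecLin = LinearMap.ker B.mulVecLin := by
  ext x
  simp only [LinearMap.mem_ker, mulVecLin_apply]
  refine ⟨fun hx => ?_, fun hx => by rw [← mulVec_mulVec, hx, mulVec_zero]⟩
  by_contra hBx
  have hquad : x ⬝ᵥ ((Bᵀ * M * B) *ᵥ x) = (B *ᵥ x) ⬝ᵥ (M *ᵥ (B *ᵥ x)) := by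
    rw [← mulVec_mulVec, ← mulVec_mulVec, dotProduct_mulVec, vecMul_transpose]
  have hpos := hM.dotProduct_mulVec_pos hBx
  rw [star_trivial, ← hquad, hx, dotProduct_zero] at hpos
  exact lt_irrefl 0 hpos

theorem ker_mulVecLin_blocks {ι κ : Type*} [Fintype κ] (B₀ B₁ B₂ : Matrix ι κ ℝ) :
    LinearMap.ker (of fun p q =>
        if p.1 = 0 then B₀ p.2 q else if p.1 = 1 then B₁ p.2 q else B₂ p.2 q :
          Matrix (Fin 3 × ι) κ ℝ).mulVecLin =
      LinearMap.ker B₀.mulVecLin ⊓ LinearMap.ker B₁.mulVecLin ⊓ LinearMap.ker B₂.mulVecLin := by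
  ext v
  simp only [LinearMap.mem_ker, mulVecLin_apply, Submodule.mem_inf, funext_iff, Prod.forall,
    Fin.forall_fin_succ]
  simp [mulVec, dotProduct, and_assoc]

end SemiStaggered

open SemiStaggered in
/-- in 3D, the common kernel of `B_x`, `B_y`, `B_z` has dimension
`3n − 1`; consequently the Schur complement `Bᵀ A⁻¹ B` (with `A = I₃ ⊗ Δ`) has exactly
`3n − 1` zero eigenvalues. -/
theorem stmt18 (n : ℕ) (hn : 2 ≤ n) (h : ℝ) (hh : h = 1 / n)
    (Bx By Bz :
      Matrix ((Fin (n - 1) × Fin (n - 1)) × Fin (n - 1)) ((Fin n × Fin n) × Fin n) ℝ)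
    (hBx : Bx = (1 / (4 * h)) • (Gmat n ⊗ₖ Hmat n ⊗ₖ Hmat n))
    (hBy : By = (1 / (4 * h)) • (Hmat n ⊗ₖ Gmat n ⊗ₖ Hmat n))
    (hBz : Bz = (1 / (4 * h)) • (Hmat n ⊗ₖ Hmat n ⊗ₖ Gmat n))
    (B : Matrix ((Fin 3) × ((Fin (n - 1) × Fin (n - 1)) × Fin (n - 1)))
          ((Fin n × Fin n) × Fin n) ℝ)
    (hB : B = Matrix.of fun p q =>
      if p.1 = 0 then Bx p.2 q else if p.1 = 1 then By p.2 q else Bz p.2 q)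
    (Δ : Matrix ((Fin (n - 1) × Fin (n - 1)) × Fin (n - 1))
          ((Fin (n - 1) × Fin (n - 1)) × Fin (n - 1)) ℝ)
    (hΔ : Δ = Bx * Bxᵀ + By * Byᵀ + Bz * Bzᵀ)
    (A : Matrix ((Fin 3) × ((Fin (n - 1) × Fin (n - 1)) × Fin (n - 1)))
          ((Fin 3) × ((Fin (n - 1) × Fin (n - 1)) × Fin (n - 1))) ℝ)
    (hA : A = (1 : Matrix (Fin 3) (Fin 3) ℝ) ⊗ₖ Δ) :
    Module.finrank ℝ
        ↥(LinearMap.ker Bx.mulVecLin ⊓ LinearMap.ker By.mulVecLin ⊓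
          LinearMap.ker Bz.mulVecLin) = 3 * n - 1 ∧
    Module.finrank ℝ (LinearMap.ker (Bᵀ * A⁻¹ * B).mulVecLin) = 3 * n - 1 := by
  have hc : 1 / (4 * h) ≠ 0 := by
    rw [hh]
    have : (n : ℝ) ≠ 0 := by exact_mod_cast (show n ≠ 0 by omega)
    simpa using this
  have hker : LinearMap.ker Bx.mulVecLin ⊓ LinearMap.ker By.mulVecLin ⊓
      LinearMap.ker Bz.mulVecLin = commonKernel n := by
    rw [hBx, hBy, hBz, ker_mulVecLin_smul hc, ker_mulVecLin_smul hc, ker_mulVecLin_smul hc]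
    rfl
  have hBx_inj : Function.Injective Bx.vecMul := hBx ▸ vecMul_injective_smul_GHH hc
  have hΔpd : Δ.PosDef := by
    rw [hΔ, ← conjTranspose_eq_transpose_of_trivial, ← conjTranspose_eq_transpose_of_trivial,
      ← conjTranspose_eq_transpose_of_trivial]
    exact ((PosDef.mul_conjTranspose_self Bx hBx_inj).add_posSemidef
      (posSemidef_self_mul_conjTranspose By)).add_posSemidef (posSemidef_self_mul_conjTranspose Bz)
  have hAinv : A⁻¹.PosDef := hA ▸ (PosDef.one.kronecker hΔpd).inv
  rw [ker_mulVecLin_transpose_mul_mul hAinv, hB, ker_mulVecLin_blocks, hker]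
  exact ⟨finrank_commonKernel hn, finrank_commonKernel hn⟩
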